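/- arXiv:2210.13093 — 2 statements merged into one kernel-verified Lean document; each statement's English description precedes it below -/
import Mathlib

section
/- Let P, Q be commuting positive bounded operators on a Hilbert space H with P + Q = I. For every x ∈ H, ⟨x, P^{1/2}Q^{1/2} x⟩ = sup { r(x,x) : r a positive Hermitian sesquilinear form on H with |r(a,b)|² ≤ ⟨a,Pa⟩⟨b,Qb⟩ for all a,b }. -/
/-!
Put `A = P^{1/2}` and `B = Q^{1/2}`; they commute, and `r` is dominated by `P` and `Q` exactly
when `‖r(a, b)‖ ≤ ‖A a‖ ‖B b‖`. The form `⟪A a, B b⟫` is dominated and takes the value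
`⟪x, A B x⟫`. Conversely, a dominated positive form is `⟪a, X b⟫` for a positive operator `X`.
If `A` is invertible, `Z = A⁻¹ X A⁻¹` satisfies `‖Z y‖ ≤ ‖B A⁻¹ y‖`, hence `Z² ≤ (B A⁻¹)²`;
since the square root is operator monotone, `Z ≤ B A⁻¹`, that is `X ≤ A B`. In general one
applies this to `A + ε` and lets `ε → 0`.
-/

open scoped InnerProductSpace
open Filter Topology

namespace ContinuousLinearMap

section RCLike

variable {𝕜 E F : Type*} [RCLike 𝕜] [NormedAddCommGroup E] [InnerProductSpace 𝕜 E]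
  [NormedAddCommGroup F] [InnerProductSpace 𝕜 F] [CompleteSpace E] [CompleteSpace F]

theorem adjoint_comp_self_le_of_norm_apply_le {S T : E →L[𝕜] F} (h : ∀ y, ‖S y‖ ≤ ‖T y‖) :
    adjoint S ∘L S ≤ adjoint T ∘L T := by
  refine ⟨(isPositive_adjoint_comp_self T).isSymmetric.sub
    (isPositive_adjoint_comp_self S).isSymmetric, fun y => ?_⟩
  rw [reApplyInnerSelf_apply, sub_apply, inner_sub_left, map_sub, sub_nonneg,
    ← apply_norm_sq_eq_inner_adjoint_left, ← apply_norm_sq_eq_inner_adjoint_left]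
  exact pow_le_pow_left₀ (norm_nonneg _) (h y) 2

end RCLike

variable {H : Type*} [NormedAddCommGroup H] [InnerProductSpace ℂ H]

theorem norm_apply_le_norm_add_smul_one_apply {A : H →L[ℂ] H} (hA : 0 ≤ A) {ε : ℝ} (hε : 0 ≤ ε)
    (a : H) : ‖A a‖ ≤ ‖(A + ε • 1) a‖ := by
  have hAa : 0 ≤ RCLike.re ⟪A a, a⟫_ℂ :=
    ((nonneg_iff_isPositive A).mp hA).re_inner_nonneg_left a
  have : ‖A a‖ ^ 2 ≤ ‖(A + ε • 1) a‖ ^ 2 := by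
    rw [add_apply, smul_apply, one_apply_eq_self, norm_add_sq (𝕜 := ℂ), inner_smul_right_eq_smul,
      RCLike.smul_re]
    nlinarith [sq_nonneg ‖ε • a‖]
  exact le_of_pow_le_pow_left₀ two_ne_zero (norm_nonneg _) this

variable [CompleteSpace H]

theorem le_of_norm_apply_le {S T : H →L[ℂ] H} (hS : 0 ≤ S) (hT : 0 ≤ T)
    (h : ∀ y, ‖S y‖ ≤ ‖T y‖) : S ≤ T := by
  have := CFC.sqrt_le_sqrt _ _ (adjoint_comp_self_le_of_norm_apply_le h)
  rwa [← star_eq_adjoint, ← star_eq_adjoint, hS.isSelfAdjoint.star_eq, hT.isSelfAdjoint.star_eq,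
    ← mul_def, ← mul_def, CFC.sqrt_mul_self S, CFC.sqrt_mul_self T] at this

theorem le_mul_of_norm_inner_le_of_isStrictlyPositive {A B X : H →L[ℂ] H}
    (hA : IsStrictlyPositive A) (hB : 0 ≤ B) (hAB : Commute A B) (hX : 0 ≤ X)
    (h : ∀ a b, ‖⟪a, X b⟫_ℂ‖ ≤ ‖A a‖ * ‖B b‖) : X ≤ A * B := by
  set v := Ring.inverse A with hv_def
  have hv : 0 ≤ v := hA.ringInverse.nonneg
  have hvB : Commute v B := by
    rw [hv_def, Ring.inverse_of_isUnit hA.isUnit]; exact Commute.units_inv_left hAB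
  have hAv (y : H) : A (v y) = y := DFunLike.congr_fun (Ring.mul_inverse_cancel A hA.isUnit) y
  have hZW : v * X * v ≤ B * v := by
    refine le_of_norm_apply_le (conjugate_nonneg_of_nonneg hX hv)
      (hvB.symm.mul_nonneg hB hv) fun y => ?_
    set z := (v * X * v) y
    have hz : ‖z‖ ^ 2 ≤ ‖z‖ * ‖(B * v) y‖ :=
      calc ‖z‖ ^ 2 = ‖⟪z, v (X (v y))⟫_ℂ‖ := by
            rw [← inner_self_eq_norm_sq (𝕜 := ℂ), inner_self_re_eq_norm]; rfl
        _ = ‖⟪v z, X (v y)⟫_ℂ‖ := by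
            rw [((nonneg_iff_isPositive v).mp hv).inner_left_eq_inner_right]
        _ ≤ ‖A (v z)‖ * ‖B (v y)‖ := h _ _
        _ = ‖z‖ * ‖(B * v) y‖ := by rw [hAv]; rfl
    nlinarith [norm_nonneg z, norm_nonneg ((B * v) y)]
  calc X = A * (v * X * v) * A := by
        simp only [v, mul_assoc, Ring.inverse_mul_cancel A hA.isUnit, mul_one]
        rw [← mul_assoc, Ring.mul_inverse_cancel A hA.isUnit, one_mul]
    _ ≤ A * (B * v) * A := conjugate_le_conjugate_of_nonneg hZW hA.nonneg
    _ = A * B := by rw [mul_assoc, mul_assoc, Ring.inverse_mul_cancel A hA.isUnit, mul_one]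

theorem le_mul_of_norm_inner_le {A B X : H →L[ℂ] H} (hA : 0 ≤ A) (hB : 0 ≤ B)
    (hAB : Commute A B) (hX : 0 ≤ X) (h : ∀ a b, ‖⟪a, X b⟫_ℂ‖ ≤ ‖A a‖ * ‖B b‖) :
    X ≤ A * B := by
  have hXε (ε : ℝ) (hε : 0 < ε) : X ≤ A * B + ε • B := by
    have hAε : IsStrictlyPositive (A + ε • 1) :=
      IsStrictlyPositive.nonneg_add hA (isStrictlyPositive_one.smul hε)
    have := le_mul_of_norm_inner_le_of_isStrictlyPositive hAε hB
      (hAB.add_left ((Commute.one_left B).smul_left ε)) hX fun a b =>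
        (h a b).trans (mul_le_mul_of_nonneg_right
          (norm_apply_le_norm_add_smul_one_apply hA hε.le a) (norm_nonneg _))
    rwa [add_mul, smul_mul_assoc, one_mul] at this
  have hlim : Tendsto (fun ε : ℝ => A * B + ε • B) (𝓝[>] 0) (𝓝 (A * B)) :=
    tendsto_nhdsWithin_of_tendsto_nhds (Continuous.tendsto' (by fun_prop) 0 _ (by simp))
  exact ge_of_tendsto hlim (eventually_nhdsWithin_of_forall hXε)

theorem re_apply_self_le_of_norm_le {A B : H →L[ℂ] H} (hA : 0 ≤ A) (hB : 0 ≤ B)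
    (hAB : Commute A B) {r : H →ₗ⋆[ℂ] H →ₗ[ℂ] ℂ} (hherm : ∀ a b, r a b = starRingEnd ℂ (r b a))
    (hpos : ∀ a, 0 ≤ (r a a).re) (hdom : ∀ a b, ‖r a b‖ ≤ ‖A a‖ * ‖B b‖) (x : H) :
    (r x x).re ≤ (⟪x, (A * B) x⟫_ℂ).re := by
  have hbdd (a b : H) : ‖r a b‖ ≤ ‖A‖ * ‖B‖ * ‖a‖ * ‖b‖ := by
    calc ‖r a b‖ ≤ ‖A a‖ * ‖B b‖ := hdom a b
      _ ≤ (‖A‖ * ‖a‖) * (‖B‖ * ‖b‖) :=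
        mul_le_mul (A.le_opNorm a) (B.le_opNorm b) (norm_nonneg _) (by positivity)
      _ = ‖A‖ * ‖B‖ * ‖a‖ * ‖b‖ := by ring
  obtain ⟨X, hXr⟩ : ∃ X : H →L[ℂ] H, ∀ a b, ⟪X a, b⟫_ℂ = r a b :=
    ⟨InnerProductSpace.continuousLinearMapOfBilin (r.mkContinuous₂ _ hbdd),
      InnerProductSpace.continuousLinearMapOfBilin_apply _⟩
  have hXr' (a b : H) : ⟪a, X b⟫_ℂ = r a b := by rw [← inner_conj_symm, hXr, ← hherm]
  have hX : 0 ≤ X := (nonneg_iff_isPositive X).mpr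
    ⟨fun a b => (hXr a b).trans (hXr' a b).symm,
      fun a => by simpa [reApplyInnerSelf_apply, hXr] using hpos a⟩
  have hXAB := le_mul_of_norm_inner_le hA hB hAB hX fun a b => hXr' a b ▸ hdom a b
  have := hXAB.re_inner_nonneg_right x
  rwa [sub_apply, inner_sub_right, map_sub, hXr', sub_nonneg] at this

theorem isGreatest_re_apply_self {A B : H →L[ℂ] H} (hA : 0 ≤ A) (hB : 0 ≤ B)
    (hAB : Commute A B) (x : H) :
    IsGreatest {c : ℝ | ∃ r : H →ₗ⋆[ℂ] H →ₗ[ℂ] ℂ,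
        (∀ a b : H, r a b = starRingEnd ℂ (r b a)) ∧ (∀ a : H, 0 ≤ (r a a).re) ∧
        (∀ a b : H, ‖r a b‖ ≤ ‖A a‖ * ‖B b‖) ∧ c = (r x x).re}
      (⟪x, (A * B) x⟫_ℂ).re := by
  have hABpos := (nonneg_iff_isPositive _).mp (hAB.mul_nonneg hA hB)
  let r : H →ₗ⋆[ℂ] H →ₗ[ℂ] ℂ := ((innerₛₗ ℂ).comp (A : H →ₗ[ℂ] H)).compl₂ (B : H →ₗ[ℂ] H)
  have hr (a b : H) : r a b = ⟪a, (A * B) b⟫_ℂ :=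
    ((nonneg_iff_isPositive A).mp hA).inner_left_eq_inner_right a (B b)
  refine ⟨⟨r, fun a b => ?_, fun a => ?_, fun a b => norm_inner_le_norm (A a) (B b),
    by rw [hr]⟩, ?_⟩
  · rw [hr, hr, inner_conj_symm, hABpos.inner_left_eq_inner_right]
  · rw [hr]
    exact hABpos.re_inner_nonneg_right a
  · rintro c ⟨r, hherm, hpos, hdom, rfl⟩
    exact re_apply_self_le_of_norm_le hA hB hAB hherm hpos hdom x

theorem norm_rpow_half_apply_sq {P : H →L[ℂ] H} (hP : 0 ≤ P) (a : H) :
    ‖(P ^ (1 / 2 : ℝ)) a‖ ^ 2 = (⟪a, P a⟫_ℂ).re := by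
  rw [apply_norm_sq_eq_inner_adjoint_right, ← star_eq_adjoint,
    CFC.rpow_nonneg.isSelfAdjoint.star_eq, ← mul_def, ← CFC.sqrt_eq_rpow,
    CFC.sqrt_mul_sqrt_self P hP]
  rfl

end ContinuousLinearMap

theorem geometric_mean_sup_general (H : Type*) [NormedAddCommGroup H]
    [InnerProductSpace ℂ H] [CompleteSpace H]
    (P Q : H →L[ℂ] H) (hP : 0 ≤ P) (hQ : 0 ≤ Q)
    (hPQ : P + Q = 1) :
    ∀ x : H,
      (inner ℂ x ((P ^ (1 / 2 : ℝ) * Q ^ (1 / 2 : ℝ)) x) : ℂ).re =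
        sSup { c : ℝ | ∃ r : H →ₗ⋆[ℂ] H →ₗ[ℂ] ℂ,
          (∀ a b : H, r a b = starRingEnd ℂ (r b a)) ∧
          (∀ a : H, 0 ≤ (r a a).re) ∧
          (∀ a b : H, ‖r a b‖ ^ 2 ≤ (inner ℂ a (P a) : ℂ).re * (inner ℂ b (Q b) : ℂ).re) ∧
          c = (r x x).re } := by
  intro x
  have hPQ_comm : Commute P Q := by
    simpa using (hPQ ▸ Commute.one_right P : Commute P (P + Q)).sub_right (Commute.refl P)
  have hAB : Commute (P ^ (1 / 2 : ℝ)) (Q ^ (1 / 2 : ℝ)) := by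
    rw [CFC.rpow_def, CFC.rpow_def]
    exact ((hPQ_comm.cfc_nnreal _).symm.cfc_nnreal _).symm
  simp only [← ContinuousLinearMap.norm_rpow_half_apply_sq hP,
    ← ContinuousLinearMap.norm_rpow_half_apply_sq hQ, ← mul_pow, sq_le_sq, abs_norm, abs_mul]
  have := ContinuousLinearMap.isGreatest_re_apply_self (CFC.rpow_nonneg (a := P) (y := 1 / 2))
    (CFC.rpow_nonneg (a := Q) (y := 1 / 2)) hAB x
  exact this.csSup_eq.symm

/-- Maximality characterization of the geometric mean (Pusz–Woronowicz): for commuting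
positive bounded `P Q` with `P + Q = 1`, `⟨x, P^{1/2}Q^{1/2} x⟩` is the supremum of
`r(x,x)` over all positive Hermitian sesquilinear forms `r` dominated by `P` and `Q`. -/
theorem geometric_mean_sup (H : Type*) [NormedAddCommGroup H]
    [InnerProductSpace ℂ H] [CompleteSpace H]
    (P Q : H →L[ℂ] H) (hP : 0 ≤ P) (hQ : 0 ≤ Q) (hcomm : P * Q = Q * P)
    (hPQ : P + Q = 1) :
    ∀ x : H,
      (inner ℂ x ((P ^ (1 / 2 : ℝ) * Q ^ (1 / 2 : ℝ)) x) : ℂ).re =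
        sSup { c : ℝ | ∃ r : H →ₗ⋆[ℂ] H →ₗ[ℂ] ℂ,
          (∀ a b : H, r a b = starRingEnd ℂ (r b a)) ∧
          (∀ a : H, 0 ≤ (r a a).re) ∧
          (∀ a b : H, ‖r a b‖ ^ 2 ≤ (inner ℂ a (P a) : ℂ).re * (inner ℂ b (Q b) : ℂ).re) ∧
          c = (r x x).re } :=
  geometric_mean_sup_general H P Q hP hQ hPQ
end

section
/- Let ω̂ and ν̂ be positive-definite density matrices on ℂⁿ. Then the limit −lim_{t→0⁺} (1/t)[Tr(ω̂^{1-t} ν̂^t) − Tr(ω̂)] exists and equals Tr(ω̂ log ω̂) − Tr(ω̂ log ν̂), i.e., Uhlmann's relative entropy for matrix algebras reduces to von Neumann's relative entropy. -/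
/-!
Diagonalize `ω̂ = U diag(a) U*` and `ν̂ = V diag(b) V*`. With the transition probabilities
`c i j = |(U* V) i j|²`, every trace `Tr(f(ω̂) g(ν̂))` equals `∑ i j, f(a i) g(b j) c i j`, so
`Tr(ω̂^{1-t} ν̂^t) = ∑ i j, a i ^ (1 - t) b j ^ t c i j` is a finite sum of smooth functions of `t`.
Its derivative at `0` is `∑ i j, a i (log b j - log a i) c i j`, which reads back as
`Tr(ω̂ log ν̂) - Tr(ω̂ log ω̂)`; the limit is minus this one-sided derivative.
-/

open ComplexOrder Matrix Filter Topology
open scoped Matrix.Norms.L2Operator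

noncomputable instance matrixCStarAlgebra {n : ℕ} :
    CStarAlgebra (Matrix (Fin n) (Fin n) ℂ) := {}

lemma Real.hasDerivAt_rpow_one_sub_mul_rpow {a b : ℝ} (ha : 0 < a) (hb : 0 < b) (t : ℝ) :
    HasDerivAt (fun s => a ^ (1 - s) * b ^ s) (a ^ (1 - t) * b ^ t * (log b - log a)) t := by
  have h := (((hasDerivAt_id' t).const_sub 1).const_rpow ha).fun_mul
    ((hasDerivAt_id' t).const_rpow hb)
  exact h.congr_deriv (by ring)

namespace Matrix

variable {ι 𝕜 : Type*} [Fintype ι] [DecidableEq ι] [RCLike 𝕜]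

lemma trace_unitary_conj_diagonal_mul (U V : unitary (Matrix ι ι 𝕜)) (d e : ι → 𝕜) :
    (U * diagonal d * (star U : Matrix ι ι 𝕜) * (V * diagonal e * (star V : Matrix ι ι 𝕜))).trace =
      ∑ i, ∑ j, d i * e j * ‖((star U * V : unitary (Matrix ι ι 𝕜)) : Matrix ι ι 𝕜) i j‖ ^ 2 := by
  calc _ = (diagonal d * ((star U * V : unitary _) : Matrix ι ι 𝕜) *
        (diagonal e * star ((star U * V : unitary _) : Matrix ι ι 𝕜))).trace := by
        simp only [Submonoid.coe_mul, Unitary.coe_star, star_mul, star_star, mul_assoc]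
        rw [trace_mul_comm (U : Matrix ι ι 𝕜)]
        simp only [mul_assoc]
    _ = _ := by
        simp only [trace, diag_apply, mul_apply, diagonal_apply, ite_mul, zero_mul,
          Finset.sum_ite_eq, Finset.mem_univ, if_true, star_apply, RCLike.star_def,
          ← RCLike.mul_conj]
        exact Finset.sum_congr rfl fun i _ => Finset.sum_congr rfl fun j _ => by ring

variable {A B : Matrix ι ι 𝕜}

lemma trace_cfc_mul_cfc (hA : A.IsHermitian) (hB : B.IsHermitian) (f g : ℝ → ℝ) :
    (cfc f A * cfc g B).trace = ∑ i, ∑ j, ((f (hA.eigenvalues i) * g (hB.eigenvalues j) *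
      ‖((star hA.eigenvectorUnitary * hB.eigenvectorUnitary : unitary _) : Matrix ι ι 𝕜) i j‖ ^ 2
        : ℝ) : 𝕜) := by
  rw [hA.cfc_eq, hB.cfc_eq, IsHermitian.cfc, IsHermitian.cfc, Unitary.conjStarAlgAut_apply,
    Unitary.conjStarAlgAut_apply, trace_unitary_conj_diagonal_mul]
  push_cast
  rfl

lemma hasDerivAt_re_trace_cfc_rpow_mul_cfc_rpow (hA : A.PosDef) (hB : B.PosDef) :
    HasDerivAt
      (fun t : ℝ => RCLike.re (cfc (fun x : ℝ => x ^ (1 - t)) A * cfc (fun x : ℝ => x ^ t) B).trace)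
      (RCLike.re (A * cfc Real.log B).trace - RCLike.re (A * cfc Real.log A).trace) 0 := by
  set a := hA.isHermitian.eigenvalues
  set b := hB.isHermitian.eigenvalues
  set c : ι → ι → ℝ := fun i j => ‖((star hA.isHermitian.eigenvectorUnitary *
    hB.isHermitian.eigenvectorUnitary : unitary _) : Matrix ι ι 𝕜) i j‖ ^ 2
  have re_trace (f g : ℝ → ℝ) :
      RCLike.re (cfc f A * cfc g B).trace = ∑ i, ∑ j, f (a i) * g (b j) * c i j := by
    simp only [trace_cfc_mul_cfc hA.isHermitian hB.isHermitian, map_sum, RCLike.ofReal_re]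
    rfl
  have hA_eq : cfc (fun x : ℝ => x) A = A := cfc_id' ℝ A hA.isHermitian
  have hAlogB : A * cfc Real.log B = cfc (fun x : ℝ => x) A * cfc Real.log B := by
    rw [hA_eq]
  -- `A log A` is paired with `1 = cfc 1 B` so that it expands in the same transition probabilities.
  have hAlogA :
      A * cfc Real.log A = cfc (fun x : ℝ => x * Real.log x) A * cfc (fun _ : ℝ => 1) B := by
    have hlog : ContinuousOn Real.log (spectrum ℝ A) := by
      rw [continuousOn_iff_continuous_domRestrict]; fun_prop
    have hB_one : cfc (fun _ : ℝ => (1 : ℝ)) B = 1 := cfc_const_one ℝ B hB.isHermitian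
    rw [cfc_mul (fun x : ℝ => x) Real.log A (hg := hlog), hA_eq, hB_one, mul_one]
  simp only [hAlogB, hAlogA, re_trace]
  refine (HasDerivAt.fun_sum fun i _ => HasDerivAt.fun_sum fun j _ =>
    (Real.hasDerivAt_rpow_one_sub_mul_rpow (hA.eigenvalues_pos i) (hB.eigenvalues_pos j)
      0).mul_const (c i j)).congr_deriv ?_
  simp only [sub_zero, Real.rpow_one, Real.rpow_zero, ← Finset.sum_sub_distrib]
  exact Finset.sum_congr rfl fun i _ => Finset.sum_congr rfl fun j _ => by ring

end Matrix

theorem uhlmann_eq_vonNeumann_general {n : ℕ}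
    (w v : Matrix (Fin n) (Fin n) ℂ)
    (hw : w.PosDef) (hv : v.PosDef) :
    Tendsto
      (fun t : ℝ => -(1 / t) *
        (((cfc (fun x : ℝ => x ^ (1 - t)) w * cfc (fun x : ℝ => x ^ t) v).trace).re -
          (w.trace).re))
      (𝓝[>] (0 : ℝ))
      (𝓝 (((w * cfc Real.log w).trace).re - ((w * cfc Real.log v).trace).re)) := by
  have h_slope := (hasDerivAt_re_trace_cfc_rpow_mul_cfc_rpow hw hv).tendsto_slope_zero_right.neg
  have h_zero : cfc (fun x : ℝ => x ^ (1 - (0 : ℝ))) w * cfc (fun x : ℝ => x ^ (0 : ℝ)) v = w := by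
    have hw_id : cfc (fun x : ℝ => x) w = w := cfc_id' ℝ w hw.isHermitian
    have hv_one : cfc (fun _ : ℝ => (1 : ℝ)) v = 1 := cfc_const_one ℝ v hv.isHermitian
    simp only [sub_zero, Real.rpow_one, Real.rpow_zero, hw_id, hv_one, mul_one]
  rw [neg_sub] at h_slope
  refine h_slope.congr fun t => ?_
  simp only [zero_add, h_zero, smul_eq_mul, one_div, neg_mul, RCLike.re_to_complex]

/-- For positive definite density matrices `ω̂, ν̂`, Uhlmann's relative entropy
`−lim_{t→0⁺} (1/t)[Tr(ω̂^{1-t} ν̂^t) − Tr(ω̂)]` exists and equals von Neumann's relative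
entropy `Tr(ω̂ log ω̂) − Tr(ω̂ log ν̂)` (powers and logarithms via the functional
calculus `cfc`). -/
theorem uhlmann_eq_vonNeumann {n : ℕ}
    (w v : Matrix (Fin n) (Fin n) ℂ)
    (hw : w.PosDef) (hv : v.PosDef) (hw1 : w.trace = 1) (hv1 : v.trace = 1) :
    Tendsto
      (fun t : ℝ => -(1 / t) *
        (((cfc (fun x : ℝ => x ^ (1 - t)) w * cfc (fun x : ℝ => x ^ t) v).trace).re -
          (w.trace).re))
      (𝓝[>] (0 : ℝ))
      (𝓝 (((w * cfc Real.log w).trace).re - ((w * cfc Real.log v).trace).re)) :=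
  uhlmann_eq_vonNeumann_general w v hw hv
end
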